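/- Half-graph Euler equation: let W(x,y) = 1 if y + 1/2 ≤ x or x + 1/2 ≤ y, 0 otherwise, on [0,1]². If θ : [0,1] → [0,1] is measurable and satisfies the stationarity condition ∫₀¹ W(x,y)(1 − 2θ(y)) dy = λ (constant) for a.e. x in some interval R ⊆ [1/2, 1], then 1 − 2θ(y) = 0 for a.e. y ∈ R − 1/2; i.e., θ = 1/2 a.e. on R − 1/2. -/

import Mathlib

open MeasureTheory Set

/-- The half-graph graphon. -/
noncomputable def Whalf : ℝ → ℝ → ℝ := fun x y =>
  if y + 1/2 ≤ x ∨ x + 1/2 ≤ y then 1 else 0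

/-!
For `x ∈ (1/2, 1]`, the row `y ↦ Whalf x y` restricted to `[0, 1]` is the indicator of
`[0, x - 1/2]`, so the stationarity condition says that the primitive of `1 - 2θ` evaluated at
`x - 1/2` is constant for a.e. `x` in `[a, b]`. Being continuous, this primitive is then constant on
`(a - 1/2, b - 1/2)`, and the Lebesgue differentiation theorem shows that its derivative
`1 - 2θ` vanishes a.e. there.
-/

theorem MeasureTheory.LocallyIntegrable.ae_restrict_eq_zero_of_primitive_eq_const {E : Type*}
    [NormedAddCommGroup E] [NormedSpace ℝ E] [CompleteSpace E] {f : ℝ → E}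
    (hf : LocallyIntegrable f volume) {U : Set ℝ} (hU : IsOpen U) {c : ℝ} {C : E}
    (h : ∀ t ∈ U, ∫ s in c..t, f s = C) : ∀ᵐ x ∂volume.restrict U, f x = 0 := by
  filter_upwards [ae_restrict_mem hU.measurableSet,
    ae_restrict_of_ae (LocallyIntegrable.ae_hasDerivAt_integral hf)] with x hx hderiv
  have hconst : (fun t => ∫ s in c..t, f s) =ᶠ[nhds x] fun _ => C :=
    Filter.eventually_of_mem (hU.mem_nhds hx) h
  exact (hderiv c).unique ((hasDerivAt_const x C).congr_of_eventuallyEq hconst)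

theorem MeasureTheory.LocallyIntegrable.continuous_primitive {E : Type*} [NormedAddCommGroup E]
    [NormedSpace ℝ E] {f : ℝ → E} (hf : LocallyIntegrable f volume) (c : ℝ) :
    Continuous fun t => ∫ s in c..t, f s :=
  intervalIntegral.continuous_primitive (fun _ _ => intervalIntegrable_iff.mpr <|
    (hf.integrableOn_isCompact isCompact_uIcc).mono_set uIoc_subset_uIcc) c

theorem setIntegral_Icc_Whalf_mul {x : ℝ} (hx : x ∈ Ioc (1/2) 1) (g : ℝ → ℝ) :
    ∫ y in Icc 0 1, Whalf x y * g y = ∫ y in 0..x - 1/2, g y := by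
  have hrow : ∀ y ∈ Icc (0:ℝ) 1, Whalf x y * g y = (Icc 0 (x - 1/2)).indicator g y := by
    rintro y ⟨hy0, hy1⟩
    by_cases hy : y ≤ x - 1/2
    · rw [indicator_of_mem (show y ∈ Icc 0 (x - 1/2) from ⟨hy0, hy⟩), Whalf,
        if_pos (Or.inl (by linarith)), one_mul]
    · have hfar : ¬(y + 1/2 ≤ x ∨ x + 1/2 ≤ y) :=
        not_or.mpr ⟨not_le.mpr (by linarith), not_le.mpr (by linarith [hx.1])⟩
      rw [indicator_of_notMem (fun h => hy h.2), Whalf, if_neg hfar, zero_mul]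
  rw [setIntegral_congr_fun measurableSet_Icc hrow, setIntegral_indicator measurableSet_Icc,
    inter_eq_self_of_subset_right (Icc_subset_Icc_right (by linarith [hx.2])),
    integral_Icc_eq_integral_Ioc, intervalIntegral.integral_of_le (by linarith [hx.1])]

theorem stmt_16 (θ : ℝ → ℝ) (hθmeas : Measurable θ)
    (hθrange : ∀ x, θ x ∈ Set.Icc (0:ℝ) 1)
    (a b : ℝ) (ha : 1/2 ≤ a) (hb : b ≤ 1)
    (lam : ℝ)
    (hstat : ∀ᵐ x ∂(volume.restrict (Set.Icc a b)),
      (∫ y in Set.Icc (0:ℝ) 1, Whalf x y * (1 - 2 * θ y)) = lam) :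
    ∀ᵐ y ∂(volume.restrict (Set.Icc (a - 1/2) (b - 1/2))), θ y = 1/2 := by
  set f : ℝ → ℝ := fun y => 1 - 2 * θ y
  have hf : LocallyIntegrable f volume :=
    (locallyIntegrable_const (1:ℝ)).mono (by fun_prop) <| ae_of_all _ fun y => by
      have := hθrange y
      simp only [f, norm_one, Real.norm_eq_abs, abs_le]
      constructor <;> linarith [this.1, this.2]
  have hprim_ae : ∀ᵐ x ∂volume.restrict (Ioo a b), ∫ s in 0..x - 1/2, f s = lam := by
    filter_upwards [ae_restrict_mem measurableSet_Ioo,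
      ae_mono (Measure.restrict_mono Ioo_subset_Icc_self le_rfl) hstat] with x hx hxstat
    rwa [← setIntegral_Icc_Whalf_mul ⟨by linarith [hx.1], by linarith [hx.2]⟩]
  have hprim : EqOn (fun x => ∫ s in 0..x - 1/2, f s) (fun _ => lam) (Ioo a b) :=
    Measure.eqOn_open_of_ae_eq hprim_ae isOpen_Ioo
      ((hf.continuous_primitive 0).comp (continuous_sub_right _)).continuousOn continuousOn_const
  have hzero : ∀ᵐ y ∂volume.restrict (Ioo (a - 1/2) (b - 1/2)), f y = 0 :=
    hf.ae_restrict_eq_zero_of_primitive_eq_const isOpen_Ioo fun t ht => by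
      simpa using hprim (x := t + 1/2) ⟨by linarith [ht.1], by linarith [ht.2]⟩
  rw [Measure.restrict_congr_set Ioo_ae_eq_Icc.symm]
  filter_upwards [hzero] with y hy
  simp only [f] at hy
  linarith
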